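/- Let X_1,…,X_M with X_m ∈ ℝ^{D_m×N} be matrices such that each X_m X_mᵀ is invertible. Then the minimum of Σ_{m=1}^M ‖U_mᵀ X_m − S‖_F² over all U_m ∈ ℝ^{D_m×d} and all S ∈ ℝ^{d×N} with S Sᵀ = I_d equals M·d − Σ_{i=1}^d λ_i, where λ_1 ≥ … ≥ λ_N are the eigenvalues of Σ_{m=1}^M X_mᵀ (X_m X_mᵀ)^{-1} X_m; the minimum is attained when the rows of S are orthonormal eigenvectors of Σ_{m=1}^M X_mᵀ (X_m X_mᵀ)^{-1} X_m associated with its d largest eigenvalues and U_m = (X_m X_mᵀ)^{-1} X_m Sᵀ for each m. -/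
import Mathlib


open Matrix BigOperators

/-- Squared Frobenius norm of a real matrix: `‖A‖_F² = ∑ᵢ ∑ⱼ Aᵢⱼ²`. -/
noncomputable def frobSq {m n : Type*} [Fintype m] [Fintype n]
    (A : Matrix m n ℝ) : ℝ :=
  ∑ i, ∑ j, (A i j) ^ 2

lemma frobSq_eq_trace {m n : Type*} [Fintype m] [Fintype n] (A : Matrix m n ℝ) :
    frobSq A = Matrix.trace (A * Aᵀ) := by
  simp [frobSq, Matrix.trace, Matrix.mul_apply, Matrix.diag, sq]

lemma frobSq_nonneg {m n : Type*} [Fintype m] [Fintype n] (A : Matrix m n ℝ) :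
    0 ≤ frobSq A :=
  Finset.sum_nonneg fun _ _ => Finset.sum_nonneg fun _ _ => sq_nonneg _

lemma scalar_bound {N d : ℕ} (hd : d ≤ N) (L c : ℕ → ℝ)
    (hmono : ∀ i j, i ≤ j → j < N → L j ≤ L i)
    (hc0 : ∀ k, 0 ≤ c k) (hc1 : ∀ k, c k ≤ 1)
    (hsum : ∑ k ∈ Finset.range N, c k = d) :
    ∑ k ∈ Finset.range N, L k * c k ≤ ∑ k ∈ Finset.range d, L k := by
  rcases eq_or_lt_of_le hd with heq | hlt
  · subst heq
    have h0 : ∑ k ∈ Finset.range d, (1 - c k) = 0 := by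
      rw [Finset.sum_sub_distrib, hsum]; simp
    have hall : ∀ k ∈ Finset.range d, 1 - c k = 0 :=
      (Finset.sum_eq_zero_iff_of_nonneg (fun k _ => by linarith [hc1 k])).mp h0
    apply le_of_eq
    apply Finset.sum_congr rfl
    intro k hk
    have h := hall k hk
    have : c k = 1 := by linarith
    rw [this, mul_one]
  · set t := L d with ht
    calc ∑ k ∈ Finset.range N, L k * c k
        ≤ ∑ k ∈ Finset.range N, ((if k < d then L k - t else 0) + t * c k) := by
          apply Finset.sum_le_sum
          intro k hk
          simp only [Finset.mem_range] at hk
          by_cases h : k < d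
          · simp only [if_pos h]
            have h1 : t ≤ L k := hmono k d (le_of_lt h) hlt
            nlinarith [hc0 k, hc1 k]
          · simp only [if_neg h]
            have h1 : L k ≤ t := hmono d k (le_of_not_gt h) hk
            nlinarith [hc0 k]
      _ = ∑ k ∈ Finset.range N, (if k < d then L k - t else 0) + t * d := by
          rw [Finset.sum_add_distrib, ← Finset.mul_sum, hsum]
      _ = ∑ k ∈ Finset.range d, (L k - t) + t * d := by
          congr 1
          rw [← Finset.sum_filter]
          congr 1
          ext k; simp only [Finset.mem_filter, Finset.mem_range]; omega
      _ ≤ ∑ k ∈ Finset.range d, L k := by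
          rw [Finset.sum_sub_distrib]
          simp
          ring_nf
          simp

lemma mcca_decomp {D N d : ℕ} (X : Matrix (Fin D) (Fin N) ℝ)
    (hX : IsUnit (X * Xᵀ))
    (S : Matrix (Fin d) (Fin N) ℝ) (hS : S * Sᵀ = 1)
    (U : Matrix (Fin D) (Fin d) ℝ) :
    frobSq (Uᵀ * X - S)
      = frobSq (Uᵀ * X - S * (Xᵀ * (X * Xᵀ)⁻¹ * X))
        + ((d : ℝ) - Matrix.trace (S * (Xᵀ * (X * Xᵀ)⁻¹ * X) * Sᵀ)) := by
  set G := X * Xᵀ with hG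
  have hdet : IsUnit G.det := (Matrix.isUnit_iff_isUnit_det G).mp hX
  have hGi : G * G⁻¹ = 1 := Matrix.mul_nonsing_inv G hdet
  have hGi' : G⁻¹ * G = 1 := Matrix.nonsing_inv_mul G hdet
  have hGT : Gᵀ = G := by rw [hG, transpose_mul, transpose_transpose]
  have hGiT : (G⁻¹)ᵀ = G⁻¹ := by rw [Matrix.transpose_nonsing_inv, hGT]
  set P := Xᵀ * G⁻¹ * X with hP
  have hPT : Pᵀ = P := by
    rw [hP, transpose_mul, transpose_mul, transpose_transpose, hGiT, Matrix.mul_assoc]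
  have hXP : X * P = X := by
    rw [hP, ← Matrix.mul_assoc, ← Matrix.mul_assoc, ← hG, hGi, Matrix.one_mul]
  have hPP : P * P = P := by
    calc P * P = Xᵀ * G⁻¹ * (X * P) := by rw [hP, Matrix.mul_assoc]
      _ = P := by rw [hXP, hP]
  set A := Uᵀ * X - S * P with hA
  set B := S * P - S with hB
  have hAB : Uᵀ * X - S = A + B := by rw [hA, hB]; abel
  have hAP : A * P = A := by
    rw [hA, Matrix.sub_mul, Matrix.mul_assoc, hXP, Matrix.mul_assoc, hPP]
  have hABt : A * Bᵀ = 0 := by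
    rw [hB, transpose_sub, transpose_mul, hPT, Matrix.mul_sub,
      ← Matrix.mul_assoc, hAP, sub_self]
  have hPPS : P * (P * Sᵀ) = P * Sᵀ := by rw [← Matrix.mul_assoc, hPP]
  have hBBt : B * Bᵀ = 1 - S * P * Sᵀ := by
    rw [hB, transpose_sub, transpose_mul, hPT]
    have e1 : (S * P - S) * (P * Sᵀ - Sᵀ)
        = S * (P * (P * Sᵀ)) - S * (P * Sᵀ) - S * (P * Sᵀ) + S * Sᵀ := by
      simp only [Matrix.sub_mul, Matrix.mul_sub, Matrix.mul_assoc]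
      abel
    rw [e1, hPPS, hS, ← Matrix.mul_assoc]
    abel
  rw [hAB, frobSq_eq_trace, frobSq_eq_trace]
  rw [transpose_add, Matrix.add_mul, Matrix.mul_add, Matrix.mul_add]
  have hBAt : B * Aᵀ = 0 := by
    have := congrArg Matrix.transpose hABt
    rwa [transpose_mul, transpose_transpose, transpose_zero] at this
  rw [hABt, hBAt, hBBt]
  rw [Matrix.trace_add, Matrix.trace_add, Matrix.trace_add]
  rw [Matrix.trace_sub, Matrix.trace_one]
  simp [Fintype.card_fin]

lemma trace_diag_mul {N : ℕ} (lam : Fin N → ℝ) (A : Matrix (Fin N) (Fin N) ℝ) :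
    Matrix.trace (Matrix.diagonal lam * A) = ∑ i, lam i * A i i := by
  simp [Matrix.trace, Matrix.diag, Matrix.mul_apply, Matrix.diagonal_apply, ite_mul]

lemma trace_SCS_le {N d : ℕ} (hd : d ≤ N) (C : Matrix (Fin N) (Fin N) ℝ)
    (lam : Fin N → ℝ) (hlam : Antitone lam) (V : Fin N → Fin N → ℝ)
    (horth : ∀ i j, V i ⬝ᵥ V j = if i = j then (1 : ℝ) else 0)
    (heig : ∀ i, C *ᵥ V i = lam i • V i)
    (S : Matrix (Fin d) (Fin N) ℝ) (hS : S * Sᵀ = 1) :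
    Matrix.trace (S * C * Sᵀ) ≤ ∑ i : Fin d, lam (Fin.castLE hd i) := by
  set W : Matrix (Fin N) (Fin N) ℝ := Matrix.of V with hW
  have hWWt : W * Wᵀ = 1 := by
    ext i j
    have := horth i j
    simpa [Matrix.mul_apply, dotProduct, hW, Matrix.one_apply] using this
  have hWtW : Wᵀ * W = 1 := mul_eq_one_comm.mp hWWt
  have hCW : C * Wᵀ = Wᵀ * Matrix.diagonal lam := by
    ext i j
    have h := congrFun (heig j) i
    simp only [Matrix.mulVec, dotProduct, Pi.smul_apply, smul_eq_mul] at h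
    simp [Matrix.mul_apply, hW, Matrix.diagonal_apply, h, mul_comm]
  have hC : C = Wᵀ * Matrix.diagonal lam * W := by
    calc C = C * (Wᵀ * W) := by rw [hWtW, Matrix.mul_one]
      _ = (C * Wᵀ) * W := by rw [Matrix.mul_assoc]
      _ = Wᵀ * Matrix.diagonal lam * W := by rw [hCW]
  set T : Matrix (Fin N) (Fin d) ℝ := W * Sᵀ with hT
  have htr : Matrix.trace (S * C * Sᵀ) = Matrix.trace (Matrix.diagonal lam * (T * Tᵀ)) := by
    have e1 : S * C * Sᵀ = Tᵀ * (Matrix.diagonal lam * T) := by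
      rw [hC, hT, transpose_mul, transpose_transpose]
      simp only [Matrix.mul_assoc]
    rw [e1, Matrix.trace_mul_comm, Matrix.mul_assoc]
  set c : Fin N → ℝ := fun i => (T * Tᵀ) i i with hc
  have hc0 : ∀ i, 0 ≤ c i := by
    intro i
    simp only [hc, Matrix.mul_apply, Matrix.transpose_apply]
    exact Finset.sum_nonneg fun j _ => mul_self_nonneg _
  set Q : Matrix (Fin N) (Fin N) ℝ := Sᵀ * S with hQdef
  have hQ : Q * Q = Q := by
    rw [hQdef, Matrix.mul_assoc, ← Matrix.mul_assoc S Sᵀ S, hS, Matrix.one_mul]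
  have hQT : (1 - Q)ᵀ = 1 - Q := by
    rw [transpose_sub, transpose_one, hQdef, transpose_mul, transpose_transpose]
  have hQQ : (1 - Q) * (1 - Q) = 1 - Q := by
    rw [Matrix.mul_sub, Matrix.mul_one, Matrix.sub_mul, Matrix.one_mul, hQ]
    abel
  have hTTt : T * Tᵀ = W * Q * Wᵀ := by
    rw [hT, transpose_mul, transpose_transpose, hQdef]
    simp only [Matrix.mul_assoc]
  have hRRt : (W * (1 - Q)) * (W * (1 - Q))ᵀ = 1 - T * Tᵀ := by
    rw [transpose_mul, hQT]
    calc W * (1 - Q) * ((1 - Q) * Wᵀ) = W * ((1 - Q) * (1 - Q)) * Wᵀ := by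
          simp only [Matrix.mul_assoc]
      _ = W * (1 - Q) * Wᵀ := by rw [hQQ]
      _ = W * Wᵀ - W * Q * Wᵀ := by
          rw [Matrix.mul_sub, Matrix.mul_one, Matrix.sub_mul]
      _ = 1 - T * Tᵀ := by rw [hWWt, hTTt]
  set R : Matrix (Fin N) (Fin N) ℝ := W * (1 - Q) with hR
  have hc1 : ∀ i, c i ≤ 1 := by
    intro i
    have h2 : 0 ≤ (R * Rᵀ) i i := by
      simp only [Matrix.mul_apply, Matrix.transpose_apply]
      exact Finset.sum_nonneg fun j _ => mul_self_nonneg _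
    rw [hRRt] at h2
    simp only [Matrix.sub_apply, Matrix.one_apply_eq] at h2
    show (T * Tᵀ) i i ≤ 1
    linarith
  have hsum : ∑ i, c i = (d : ℝ) := by
    have e1 : Tᵀ * T = 1 := by
      rw [hT, transpose_mul, transpose_transpose, Matrix.mul_assoc,
        ← Matrix.mul_assoc Wᵀ W Sᵀ, hWtW, Matrix.one_mul, hS]
    calc ∑ i, c i = Matrix.trace (T * Tᵀ) := by simp [hc, Matrix.trace, Matrix.diag]
      _ = Matrix.trace (Tᵀ * T) := Matrix.trace_mul_comm T Tᵀ
      _ = (d : ℝ) := by rw [e1]; simp [Matrix.trace_one]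
  rw [htr, trace_diag_mul]
  set Lnat : ℕ → ℝ := fun k => if h : k < N then lam ⟨k, h⟩ else 0 with hLnat
  set cnat : ℕ → ℝ := fun k => if h : k < N then c ⟨k, h⟩ else 0 with hcnat
  have eL : ∀ i : Fin N, lam i = Lnat ↑i := fun i => by simp [hLnat, i.isLt]
  have ec : ∀ i : Fin N, c i = cnat ↑i := fun i => by simp [hcnat, i.isLt]
  have lhs_eq : ∑ i, lam i * c i = ∑ k ∈ Finset.range N, Lnat k * cnat k := by
    rw [← Fin.sum_univ_eq_sum_range (fun k => Lnat k * cnat k) N]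
    exact Finset.sum_congr rfl fun i _ => by rw [eL i, ec i]
  have rhs_eq : ∑ i : Fin d, lam (Fin.castLE hd i) = ∑ k ∈ Finset.range d, Lnat k := by
    rw [← Fin.sum_univ_eq_sum_range Lnat d]
    refine Finset.sum_congr rfl fun i _ => ?_
    have hiN : (i : ℕ) < N := lt_of_lt_of_le i.isLt hd
    simp [hLnat, hiN, Fin.castLE]
  rw [lhs_eq, rhs_eq]
  apply scalar_bound hd
  · intro i j hij hj
    have hiN : i < N := lt_of_le_of_lt hij hj
    simp only [hLnat, dif_pos hj, dif_pos hiN]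
    exact hlam (by exact hij)
  · intro k
    by_cases h : k < N
    · simp only [hcnat, dif_pos h]; exact hc0 _
    · simp [hcnat, h]
  · intro k
    by_cases h : k < N
    · simp only [hcnat, dif_pos h]; exact hc1 _
    · simp [hcnat, h]
  · rw [← Fin.sum_univ_eq_sum_range cnat N]
    rw [← hsum]
    exact Finset.sum_congr rfl fun i _ => (ec i).symm



/-- The MAXVAR MCCA optimum: the minimum of `∑ₘ ‖Uₘᵀ Xₘ - S‖_F²` over all
loading matrices `Uₘ` and `S ∈ ℝ^{d×N}` with `S Sᵀ = I_d` equals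
`M d - ∑_{i=1}^d λ_i`, where `λ_1 ≥ … ≥ λ_N` are the eigenvalues of
`C = ∑ₘ Xₘᵀ (Xₘ Xₘᵀ)⁻¹ Xₘ` (described by the antitone `lam` together with an
orthonormal family of eigenvectors `V`); the minimum is attained when the rows
of `S` are the orthonormal eigenvectors associated with the `d` largest
eigenvalues and `Uₘ = (Xₘ Xₘᵀ)⁻¹ Xₘ Sᵀ`. -/
theorem maxvar_mcca_optimal_value {M N d : ℕ} (hd : d ≤ N) (Dm : Fin M → ℕ)
    (X : ∀ m, Matrix (Fin (Dm m)) (Fin N) ℝ)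
    (hX : ∀ m, IsUnit (X m * (X m)ᵀ))
    (C : Matrix (Fin N) (Fin N) ℝ)
    (hCdef : C = ∑ m, (X m)ᵀ * (X m * (X m)ᵀ)⁻¹ * X m)
    (lam : Fin N → ℝ) (hlam : Antitone lam)
    (V : Fin N → (Fin N → ℝ))
    (horth : ∀ i j, V i ⬝ᵥ V j = if i = j then (1 : ℝ) else 0)
    (heig : ∀ i, C *ᵥ V i = lam i • V i) :
    IsLeast
      {t : ℝ | ∃ (U : ∀ m, Matrix (Fin (Dm m)) (Fin d) ℝ)
          (S : Matrix (Fin d) (Fin N) ℝ), S * Sᵀ = 1 ∧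
          t = ∑ m, frobSq ((U m)ᵀ * X m - S)}
      ((M : ℝ) * (d : ℝ) - ∑ i : Fin d, lam (Fin.castLE hd i)) ∧
    ∀ S : Matrix (Fin d) (Fin N) ℝ,
      S = Matrix.of (fun i : Fin d => V (Fin.castLE hd i)) →
      ∑ m, frobSq ((((X m * (X m)ᵀ)⁻¹ * X m * Sᵀ)ᵀ) * X m - S)
        = (M : ℝ) * (d : ℝ) - ∑ i : Fin d, lam (Fin.castLE hd i) := by
  set S₀ : Matrix (Fin d) (Fin N) ℝ := Matrix.of (fun i : Fin d => V (Fin.castLE hd i))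
    with hS₀def
  have hS0 : S₀ * S₀ᵀ = 1 := by
    ext i j
    have h1 : (S₀ * S₀ᵀ) i j = V (Fin.castLE hd i) ⬝ᵥ V (Fin.castLE hd j) := by
      simp [Matrix.mul_apply, dotProduct, hS₀def]
    rw [h1, horth]
    simp [Matrix.one_apply, Fin.castLE_inj]
  -- trace at the optimum
  have htr0 : Matrix.trace (S₀ * C * S₀ᵀ) = ∑ i : Fin d, lam (Fin.castLE hd i) := by
    have hentry : ∀ i : Fin d, (S₀ * C * S₀ᵀ) i i = lam (Fin.castLE hd i) := by
      intro i
      have h2 : ∀ k, (C * S₀ᵀ) k i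
          = lam (Fin.castLE hd i) * V (Fin.castLE hd i) k := by
        intro k
        have h := congrFun (heig (Fin.castLE hd i)) k
        simp only [Matrix.mulVec, dotProduct, Pi.smul_apply, smul_eq_mul] at h
        simpa [Matrix.mul_apply, hS₀def] using h
      rw [Matrix.mul_assoc, Matrix.mul_apply]
      simp only [h2]
      have e : ∑ k, S₀ i k * (lam (Fin.castLE hd i) * V (Fin.castLE hd i) k)
          = lam (Fin.castLE hd i) * (V (Fin.castLE hd i) ⬝ᵥ V (Fin.castLE hd i)) := by
        simp only [hS₀def, Matrix.of_apply, dotProduct, Finset.mul_sum]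
        exact Finset.sum_congr rfl fun k _ => by ring
      rw [e, horth]
      simp
    simp only [Matrix.trace, Matrix.diag]
    exact Finset.sum_congr rfl fun i _ => hentry i
  -- master identity
  have master : ∀ (U : ∀ m, Matrix (Fin (Dm m)) (Fin d) ℝ)
      (S : Matrix (Fin d) (Fin N) ℝ), S * Sᵀ = 1 →
      ∑ m, frobSq ((U m)ᵀ * X m - S)
        = ∑ m, frobSq ((U m)ᵀ * X m - S * ((X m)ᵀ * (X m * (X m)ᵀ)⁻¹ * X m))
          + ((M : ℝ) * (d : ℝ) - Matrix.trace (S * C * Sᵀ)) := by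
    intro U S hS
    have h1 : ∀ m : Fin M, frobSq ((U m)ᵀ * X m - S)
        = frobSq ((U m)ᵀ * X m - S * ((X m)ᵀ * (X m * (X m)ᵀ)⁻¹ * X m))
          + ((d : ℝ) - Matrix.trace (S * ((X m)ᵀ * (X m * (X m)ᵀ)⁻¹ * X m) * Sᵀ)) :=
      fun m => mcca_decomp (X m) (hX m) S hS (U m)
    rw [Finset.sum_congr rfl fun m _ => h1 m, Finset.sum_add_distrib,
      Finset.sum_sub_distrib]
    congr 1
    have hCS : Matrix.trace (S * C * Sᵀ)
        = ∑ m, Matrix.trace (S * ((X m)ᵀ * (X m * (X m)ᵀ)⁻¹ * X m) * Sᵀ) := by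
      rw [hCdef, Matrix.mul_sum, Matrix.sum_mul, Matrix.trace_sum]
    rw [hCS, Finset.sum_const]
    simp [mul_comm]
  -- the optimal loadings achieve `S₀ * P m`
  have hopt : ∀ m : Fin M, (((X m * (X m)ᵀ)⁻¹ * X m * S₀ᵀ)ᵀ) * X m
      = S₀ * ((X m)ᵀ * (X m * (X m)ᵀ)⁻¹ * X m) := by
    intro m
    have hGT : (X m * (X m)ᵀ)ᵀ = X m * (X m)ᵀ := by
      rw [transpose_mul, transpose_transpose]
    have hGiT : ((X m * (X m)ᵀ)⁻¹)ᵀ = (X m * (X m)ᵀ)⁻¹ := by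
      rw [Matrix.transpose_nonsing_inv, hGT]
    rw [transpose_mul, transpose_mul, transpose_transpose, hGiT]
    simp only [Matrix.mul_assoc]
  have hattain : ∑ m, frobSq ((((X m * (X m)ᵀ)⁻¹ * X m * S₀ᵀ)ᵀ) * X m - S₀)
      = (M : ℝ) * (d : ℝ) - ∑ i : Fin d, lam (Fin.castLE hd i) := by
    rw [master (fun m => (X m * (X m)ᵀ)⁻¹ * X m * S₀ᵀ) S₀ hS0, htr0]
    have hz : ∀ m : Fin M,
        frobSq ((((X m * (X m)ᵀ)⁻¹ * X m * S₀ᵀ)ᵀ) * X m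
          - S₀ * ((X m)ᵀ * (X m * (X m)ᵀ)⁻¹ * X m)) = 0 := by
      intro m
      rw [hopt m, sub_self]
      simp [frobSq]
    rw [Finset.sum_congr rfl fun m _ => hz m]
    simp
  refine ⟨⟨⟨fun m => (X m * (X m)ᵀ)⁻¹ * X m * S₀ᵀ, S₀, hS0, hattain.symm⟩, ?_⟩, ?_⟩
  · rintro t ⟨U, S, hSS, rfl⟩
    rw [master U S hSS]
    have h1 : Matrix.trace (S * C * Sᵀ) ≤ ∑ i : Fin d, lam (Fin.castLE hd i) :=
      trace_SCS_le hd C lam hlam V horth heig S hSS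
    have h2 : 0 ≤ ∑ m, frobSq ((U m)ᵀ * X m
        - S * ((X m)ᵀ * (X m * (X m)ᵀ)⁻¹ * X m)) :=
      Finset.sum_nonneg fun m _ => frobSq_nonneg _
    linarith
  · intro S hSdef
    subst hSdef
    exact hattain
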